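/- arXiv:1901.09453 — 3 statements merged into one kernel-verified Lean document; each statement's English description precedes it below -/
import Mathlib

section
/- Let X be a measurable space, let H be a set of measurable functions from X to the interval [0,1], and let D and D' be probability measures on X. Then for all h, h' ∈ H, |ε_D(h,h') − ε_{D'}(h,h')| ≤ sup_{g,g' ∈ H, t ∈ [0,1]} |D({x : |g(x) − g'(x)| > t}) − D'({x : |g(x) − g'(x)| > t})|. -/
open MeasureTheory Set

/-- The error of hypothesis `u` w.r.t. `v` under distribution `D`:
`ε_D(u,v) := E_{x∼D}[|u(x) − v(x)|]`. -/
noncomputable def errD {X : Type*} [MeasurableSpace X] (D : Measure X) (u v : X → ℝ) : ℝ :=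
  ∫ x, |u x - v x| ∂D

/-- The H̃-divergence between `D` and `D'` induced by the class `H`:
`sup_{g,g' ∈ H, t ∈ [0,1]} |D({x : |g(x) − g'(x)| > t}) − D'({x : |g(x) − g'(x)| > t})|`. -/
noncomputable def dTilde {X : Type*} [MeasurableSpace X] (H : Set (X → ℝ))
    (D D' : Measure X) : ℝ :=
  sSup {r : ℝ | ∃ g ∈ H, ∃ g' ∈ H, ∃ t ∈ Icc (0 : ℝ) 1,
    r = |(D {x | t < |g x - g' x|}).toReal - (D' {x | t < |g x - g' x|}).toReal|}

/-!
Write `F = |h - h'|`, a measurable function with values in `[0, 1]`. By the layer-cake formula,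
`ε_D(h, h') = ∫₀¹ D{F > t} dt`, and likewise for `D'`. Hence the difference of the errors is
`∫₀¹ (D{F > t} - D'{F > t}) dt`, and for each `t ∈ (0, 1]` the integrand is one of the numbers
whose supremum is `d_H̃(D, D')`.
-/

namespace MeasureTheory

variable {X : Type*} [MeasurableSpace X] {μ ν : Measure X} {f : X → ℝ} {c : ℝ}

lemma antitone_measureReal_lt [IsFiniteMeasure μ] (f : X → ℝ) :
    Antitone fun t : ℝ ↦ μ.real {x | t < f x} :=
  fun _ _ hst ↦ measureReal_mono fun _ hx ↦ hst.trans_lt hx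

lemma integrableOn_measureReal_lt_Ioc [IsFiniteMeasure μ] (f : X → ℝ) (a b : ℝ) :
    IntegrableOn (fun t : ℝ ↦ μ.real {x | t < f x}) (Ioc a b) :=
  ((antitone_measureReal_lt f).locallyIntegrable.integrableOn_isCompact isCompact_Icc).mono_set
    Ioc_subset_Icc_self

theorem integral_eq_setIntegral_Ioc_measureReal_lt [IsFiniteMeasure μ] (hf : Measurable f)
    (hf₀ : ∀ x, 0 ≤ f x) (hfc : ∀ x, f x ≤ c) :
    ∫ x, f x ∂μ = ∫ t in Ioc 0 c, μ.real {x | t < f x} := by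
  have hint : Integrable f μ :=
    .of_bound hf.aestronglyMeasurable c (.of_forall fun x ↦ by
      rw [Real.norm_of_nonneg (hf₀ x)]; exact hfc x)
  rw [hint.integral_eq_integral_meas_lt (.of_forall hf₀)]
  refine setIntegral_eq_of_subset_of_forall_sdiff_eq_zero measurableSet_Ioi Ioc_subset_Ioi_self ?_
  rintro t ⟨ht₀, htc⟩
  have hempty : {x | t < f x} = ∅ :=
    eq_empty_of_forall_notMem fun x hx ↦ htc ⟨ht₀, ((hx : t < f x).trans_le (hfc x)).le⟩
  simp [hempty]

theorem abs_integral_sub_integral_le_of_abs_measureReal_sub_le [IsFiniteMeasure μ]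
    [IsFiniteMeasure ν] (hc : 0 ≤ c) (hf : Measurable f) (hf₀ : ∀ x, 0 ≤ f x)
    (hfc : ∀ x, f x ≤ c) {C : ℝ}
    (hC : ∀ t ∈ Ioc 0 c, |μ.real {x | t < f x} - ν.real {x | t < f x}| ≤ C) :
    |∫ x, f x ∂μ - ∫ x, f x ∂ν| ≤ C * c := by
  rw [integral_eq_setIntegral_Ioc_measureReal_lt hf hf₀ hfc,
    integral_eq_setIntegral_Ioc_measureReal_lt hf hf₀ hfc,
    ← integral_sub (integrableOn_measureReal_lt_Ioc f 0 c)
      (integrableOn_measureReal_lt_Ioc f 0 c),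
    ← Real.norm_eq_abs]
  simpa [hc] using norm_setIntegral_le_of_norm_le_const (f := fun t ↦
    μ.real {x | t < f x} - ν.real {x | t < f x}) (measure_Ioc_lt_top (μ := volume)) hC

end MeasureTheory

lemma abs_sub_measure_le_dTilde {X : Type*} [MeasurableSpace X] {H : Set (X → ℝ)}
    {D D' : Measure X} [IsProbabilityMeasure D] [IsProbabilityMeasure D'] {g g' : X → ℝ}
    (hg : g ∈ H) (hg' : g' ∈ H) {t : ℝ} (ht : t ∈ Icc 0 1) :
    |(D {x | t < |g x - g' x|}).toReal - (D' {x | t < |g x - g' x|}).toReal| ≤ dTilde H D D' := by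
  refine le_csSup ⟨1, ?_⟩ ⟨g, hg, g', hg', t, ht, rfl⟩
  rintro r ⟨k, -, k', -, s, -, rfl⟩
  exact abs_sub_le_of_nonneg_of_le measureReal_nonneg measureReal_le_one
    measureReal_nonneg measureReal_le_one

theorem stmt_0 {X : Type*} [MeasurableSpace X]
    (D D' : Measure X) [IsProbabilityMeasure D] [IsProbabilityMeasure D']
    (H : Set (X → ℝ))
    (hmeas : ∀ h ∈ H, Measurable h)
    (hrange : ∀ h ∈ H, ∀ x, h x ∈ Icc (0 : ℝ) 1)
    (h h' : X → ℝ) (hh : h ∈ H) (hh' : h' ∈ H) :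
    |errD D h h' - errD D' h h'| ≤ dTilde H D D' := by
  have hle_one : ∀ x, |h x - h' x| ≤ 1 := fun x ↦
    abs_sub_le_of_nonneg_of_le (hrange h hh x).1 (hrange h hh x).2
      (hrange h' hh' x).1 (hrange h' hh' x).2
  simpa [errD] using abs_integral_sub_integral_le_of_abs_measureReal_sub_le zero_le_one
    ((hmeas h hh).sub (hmeas h' hh')).abs (fun x ↦ abs_nonneg _) hle_one
    fun t ht ↦ abs_sub_measure_le_dTilde hh hh' (Ioc_subset_Icc_self ht)
end

section
/- Let X be a measurable space, D_S and D_T probability measures on X, and f_S, f_T : X → [0,1] measurable labeling functions. Let H be a set of measurable functions from X to [0,1] with f_S ∈ H and f_T ∈ H. Then for every h ∈ H: ε_{D_T}(h, f_T) ≤ ε_{D_S}(h, f_S) + d_{H̃}(D_S, D_T) + min{ E_{x∼D_S}[|f_S(x) − f_T(x)|], E_{x∼D_T}[|f_S(x) − f_T(x)|] }. -/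
/-!
Both error functionals are integrals of `|g - g'| ∈ [0, 1]`, so by the layer-cake formula each is
`∫ t in (0, 1], D {t < |g - g'|}`. For `g, g' ∈ H` the integrands under `D_S` and `D_T` differ
pointwise by at most `d_{H̃}(D_S, D_T)`, so moving the error from `D_T` to `D_S` costs at most
the divergence. The triangle inequality through `f_S`, applied under `D_S` or under `D_T`, then
gives each of the two terms in the minimum.
-/

open MeasureTheory Set

section LayerCake

variable {X : Type*} [MeasurableSpace X] (D : Measure X)

lemma antitone_measureReal_lt [IsFiniteMeasure D] (f : X → ℝ) :
    Antitone fun t : ℝ => D.real {x | t < f x} :=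
  fun _ _ hst => measureReal_mono fun _ hx => lt_of_le_of_lt hst hx

lemma integrableOn_Ioc_measureReal_lt [IsFiniteMeasure D] (f : X → ℝ) (a b : ℝ) :
    IntegrableOn (fun t : ℝ => D.real {x | t < f x}) (Ioc a b) :=
  (((antitone_measureReal_lt D f).antitoneOn _).integrableOn_isCompact isCompact_Icc).mono_set
    Ioc_subset_Icc_self

lemma integral_eq_setIntegral_Ioc_measureReal_lt {f : X → ℝ} (hf : Integrable f D)
    (hf0 : ∀ x, 0 ≤ f x) (hf1 : ∀ x, f x ≤ 1) :
    ∫ x, f x ∂D = ∫ t in Ioc 0 1, D.real {x | t < f x} := by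
  rw [hf.integral_eq_integral_meas_lt (.of_forall hf0)]
  refine setIntegral_eq_of_subset_of_forall_sdiff_eq_zero measurableSet_Ioi Ioc_subset_Ioi_self
    fun t ht => ?_
  have h1t : 1 < t := lt_of_not_ge fun h => ht.2 ⟨ht.1, h⟩
  have hempty : {x | t < f x} = ∅ :=
    eq_empty_of_forall_notMem fun x hx => (hf1 x).not_gt (h1t.trans hx)
  simp [hempty]

end LayerCake

section Error

variable {X : Type*} [MeasurableSpace X]

lemma abs_sub_le_one_of_mem_Icc {a b : ℝ} (ha : a ∈ Icc (0 : ℝ) 1) (hb : b ∈ Icc (0 : ℝ) 1) :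
    |a - b| ≤ 1 :=
  abs_sub_le_of_nonneg_of_le ha.1 ha.2 hb.1 hb.2

lemma abs_measureReal_sub_le_dTilde {H : Set (X → ℝ)} (D D' : Measure X)
    [IsProbabilityMeasure D] [IsProbabilityMeasure D'] {g g' : X → ℝ} (hg : g ∈ H)
    (hg' : g' ∈ H) {t : ℝ} (ht : t ∈ Icc (0 : ℝ) 1) :
    |D.real {x | t < |g x - g' x|} - D'.real {x | t < |g x - g' x|}| ≤ dTilde H D D' := by
  refine le_csSup ⟨1, ?_⟩ ⟨g, hg, g', hg', t, ht, rfl⟩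
  rintro _ ⟨-, -, -, -, s, -, rfl⟩
  exact abs_sub_le_one_of_mem_Icc ⟨measureReal_nonneg, measureReal_le_one⟩
    ⟨measureReal_nonneg, measureReal_le_one⟩

lemma errD_le_errD_add_errD (D : Measure X) {u v w : X → ℝ}
    (hu : Integrable u D) (hv : Integrable v D) (hw : Integrable w D) :
    errD D u w ≤ errD D u v + errD D v w := by
  calc ∫ x, |u x - w x| ∂D ≤ ∫ x, (|u x - v x| + |v x - w x|) ∂D :=
        integral_mono (hu.sub hw).abs ((hu.sub hv).abs.add (hv.sub hw).abs) fun x =>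
          abs_sub_le _ _ _
    _ = errD D u v + errD D v w := integral_add (hu.sub hv).abs (hv.sub hw).abs

lemma errD_eq_setIntegral_Ioc (D : Measure X) [IsFiniteMeasure D] {g g' : X → ℝ}
    (hg : Measurable g) (hg' : Measurable g')
    (hrg : ∀ x, g x ∈ Icc (0 : ℝ) 1) (hrg' : ∀ x, g' x ∈ Icc (0 : ℝ) 1) :
    errD D g g' = ∫ t in Ioc 0 1, D.real {x | t < |g x - g' x|} := by
  have hle (x : X) : |g x - g' x| ≤ 1 := abs_sub_le_one_of_mem_Icc (hrg x) (hrg' x)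
  refine integral_eq_setIntegral_Ioc_measureReal_lt D ?_ (fun x => abs_nonneg _) hle
  exact .of_mem_Icc 0 1 (hg.sub hg').abs.aemeasurable (.of_forall fun x => ⟨abs_nonneg _, hle x⟩)

lemma errD_le_errD_add_dTilde (DS DT : Measure X)
    [IsProbabilityMeasure DS] [IsProbabilityMeasure DT]
    {H : Set (X → ℝ)} (hmeas : ∀ h ∈ H, Measurable h)
    (hrange : ∀ h ∈ H, ∀ x, h x ∈ Icc (0 : ℝ) 1)
    {g g' : X → ℝ} (hg : g ∈ H) (hg' : g' ∈ H) :
    errD DT g g' ≤ errD DS g g' + dTilde H DS DT := by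
  rw [errD_eq_setIntegral_Ioc DT (hmeas g hg) (hmeas g' hg') (hrange g hg) (hrange g' hg'),
    errD_eq_setIntegral_Ioc DS (hmeas g hg) (hmeas g' hg') (hrange g hg) (hrange g' hg'),
    ← sub_le_iff_le_add', ← integral_sub (integrableOn_Ioc_measureReal_lt DT _ 0 1)
      (integrableOn_Ioc_measureReal_lt DS _ 0 1)]
  calc _ ≤ ‖∫ t in Ioc 0 1, (DT.real {x | t < |g x - g' x|} - DS.real {x | t < |g x - g' x|})‖ :=
        Real.le_norm_self _
    _ ≤ dTilde H DS DT * volume.real (Ioc (0 : ℝ) 1) :=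
        norm_setIntegral_le_of_norm_le_const measure_Ioc_lt_top fun t ht => by
          rw [Real.norm_eq_abs, abs_sub_comm]
          exact abs_measureReal_sub_le_dTilde DS DT hg hg' (Ioc_subset_Icc_self ht)
    _ = dTilde H DS DT := by simp

end Error

theorem stmt_2 {X : Type*} [MeasurableSpace X]
    (DS DT : Measure X) [IsProbabilityMeasure DS] [IsProbabilityMeasure DT]
    (fS fT : X → ℝ)
    (H : Set (X → ℝ))
    (hmeas : ∀ h ∈ H, Measurable h)
    (hrange : ∀ h ∈ H, ∀ x, h x ∈ Icc (0 : ℝ) 1)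
    (hfS : fS ∈ H) (hfT : fT ∈ H) :
    ∀ h ∈ H,
      errD DT h fT ≤ errD DS h fS + dTilde H DS DT +
        min (∫ x, |fS x - fT x| ∂DS) (∫ x, |fS x - fT x| ∂DT) := by
  intro h hh
  have hint (D : Measure X) [IsFiniteMeasure D] {g : X → ℝ} (hg : g ∈ H) : Integrable g D :=
    .of_mem_Icc 0 1 (hmeas g hg).aemeasurable (.of_forall (hrange g hg))
  have via_source : errD DT h fT ≤ errD DS h fS + dTilde H DS DT + errD DS fS fT := by
    have := errD_le_errD_add_errD DS (hint DS hh) (hint DS hfS) (hint DS hfT)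
    linarith [errD_le_errD_add_dTilde DS DT hmeas hrange hh hfT]
  have via_target : errD DT h fT ≤ errD DS h fS + dTilde H DS DT + errD DT fS fT := by
    have := errD_le_errD_add_errD DT (hint DT hh) (hint DT hfS) (hint DT hfT)
    linarith [errD_le_errD_add_dTilde DS DT hmeas hrange hh hfS]
  rw [← min_add_add_left]
  exact le_min via_source via_target
end

section
/- Let X be a measurable space, D a probability measure on X, and H̃ a countable nonempty set of measurable functions from X to {0,1}. Fix n ≥ 1 and δ ∈ (0,1). Then with probability at least 1 − δ over an i.i.d. sample S = (x_1, …, x_n) drawn from D^n, the following holds simultaneously for all h ∈ H̃: E_{x∼D}[h(x)] ≤ (1/n)·Σ_{i=1}^n h(x_i) + 2·Rad_S(H̃) + 3·√(log(2/δ)/(2n)). -/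
/-!
Write `A(S) = sup_h (E h - Pₙ h)` for the largest deviation of an empirical mean from its
expectation and `R(S)` for the empirical Rademacher complexity. Replacing one sample point moves
each of them by at most `1/n`, so `A - 2R` has bounded differences `3/n`. McDiarmid's inequality,
obtained by induction on `n` from Hoeffding's lemma applied to one coordinate at a time, then
bounds the probability that `A - 2R` exceeds its mean by `3 √(log (2/δ) / (2n))` by `δ/2`.
The mean is nonpositive by symmetrization: `E A` is at most the expected sup of the differences
of the empirical means of two independent samples, whose joint law is unchanged by exchanging
the samples at any set of coordinates, and averaging over these exchanges yields `2 E R`.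
-/

open MeasureTheory Set

/-- The empirical Rademacher complexity of the class `H` w.r.t. the sample `x`:
the expectation, over i.i.d. uniform signs `σ ∈ {−1,+1}^n`, of
`sup_{h ∈ H} (1/n) ∑ i σ_i h(x_i)`.  The expectation is written as the average
over all `2^n` sign vectors (encoded as `Fin n → Bool`). -/
noncomputable def radS {X : Type*} {n : ℕ} (x : Fin n → X) (H : Set (X → ℝ)) : ℝ :=
  (∑ σ : Fin n → Bool,
    sSup ((fun h => (1 / (n : ℝ)) * ∑ i, (if σ i then (1 : ℝ) else -1) * h (x i)) '' H))
    / 2 ^ n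

open ProbabilityTheory
open scoped NNReal

section Order

variable {ι : Type*} {f g : ι → ℝ} {c : ℝ}

lemma bddAbove_range_of_abs_le (h : ∀ i, |f i| ≤ c) : BddAbove (range f) :=
  ⟨c, by rintro _ ⟨i, rfl⟩; exact (abs_le.1 (h i)).2⟩

lemma abs_ciSup_le [Nonempty ι] (h : ∀ i, |f i| ≤ c) : |⨆ i, f i| ≤ c := by
  obtain ⟨i⟩ := ‹Nonempty ι›
  exact abs_le.2 ⟨(abs_le.1 (h i)).1.trans (le_ciSup (bddAbove_range_of_abs_le h) i),
    ciSup_le fun i => (abs_le.1 (h i)).2⟩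

lemma ciSup_sub_ciSup_le [Nonempty ι] (hg : BddAbove (range g)) (h : ∀ i, f i - g i ≤ c) :
    (⨆ i, f i) - ⨆ i, g i ≤ c :=
  sub_le_iff_le_add.2 <| ciSup_le fun i => by linarith [h i, le_ciSup hg i]

lemma mem_Icc_ciInf_add_of_sub_le (hf : BddBelow (range f)) (h : ∀ i j, f i - f j ≤ c) (i : ι) :
    f i ∈ Icc (⨅ j, f j) ((⨅ j, f j) + c) := by
  have : Nonempty ι := ⟨i⟩
  have : f i - c ≤ ⨅ j, f j := le_ciInf fun j => by linarith [h i j]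
  exact ⟨ciInf_le hf i, by linarith⟩

end Order

lemma Finset.sum_comp_update_sub {ι X : Type*} [Fintype ι] [DecidableEq ι] (g : ι → X → ℝ)
    (ω : ι → X) (i : ι) (x y : X) :
    ∑ j, g j (Function.update ω i x j) - ∑ j, g j (Function.update ω i y j) = g i x - g i y := by
  rw [← Finset.sum_sub_distrib, Finset.sum_eq_single i (fun j _ hj => by simp [hj]) (by simp)]
  simp

lemma Measurable.integrable_of_abs_le {α : Type*} [MeasurableSpace α] {μ : Measure α}
    [IsFiniteMeasure μ] {f : α → ℝ} (hf : Measurable f) {C : ℝ} (h : ∀ x, |f x| ≤ C) :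
    Integrable f μ :=
  .of_bound hf.aestronglyMeasurable C (ae_of_all _ h)

lemma ProbabilityTheory.HasSubgaussianMGF.add_prod_of_slices {α β : Type*} [MeasurableSpace α]
    [MeasurableSpace β] {μ : Measure α} {ν : Measure β} [IsProbabilityMeasure μ]
    [IsProbabilityMeasure ν] {Y : α × β → ℝ} {Z : β → ℝ} {cY cZ : ℝ≥0} (hYm : Measurable Y)
    (hZm : Measurable Z) (hY : ∀ b, HasSubgaussianMGF (fun a => Y (a, b)) cY μ)
    (hZ : HasSubgaussianMGF Z cZ ν) :
    HasSubgaussianMGF (fun p => Y p + Z p.2) (cY + cZ) (μ.prod ν) := by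
  have hslice (t : ℝ) (b : β) : ∫ a, Real.exp (t * (Y (a, b) + Z b)) ∂μ =
      mgf (fun a => Y (a, b)) μ t * Real.exp (t * Z b) := by
    simp_rw [mul_add, Real.exp_add, integral_mul_const, mgf]
  have hslice_le (t : ℝ) (b : β) : mgf (fun a => Y (a, b)) μ t * Real.exp (t * Z b) ≤
      Real.exp (cY * t ^ 2 / 2) * Real.exp (t * Z b) :=
    mul_le_mul_of_nonneg_right ((hY b).mgf_le t) (Real.exp_nonneg _)
  have hint (t : ℝ) : Integrable (fun p => Real.exp (t * (Y p + Z p.2))) (μ.prod ν) := by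
    have hm : Measurable fun p : α × β => Real.exp (t * (Y p + Z p.2)) := by fun_prop
    refine (integrable_prod_iff' hm.aestronglyMeasurable).2 ⟨ae_of_all _ fun b => ?_, ?_⟩
    · simp_rw [mul_add, Real.exp_add]
      exact ((hY b).integrable_exp_mul t).mul_const _
    · refine ((hZ.integrable_exp_mul t).const_mul (Real.exp (cY * t ^ 2 / 2))).mono'
        hm.norm.stronglyMeasurable.integral_prod_left'.aestronglyMeasurable
        (ae_of_all _ fun b => ?_)
      simp_rw [Real.norm_eq_abs, Real.abs_exp, hslice,
        abs_of_nonneg (mul_nonneg mgf_nonneg (Real.exp_nonneg _))]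
      exact hslice_le t b
  refine ⟨hint, fun t => ?_⟩
  calc mgf (fun p => Y p + Z p.2) (μ.prod ν) t
      = ∫ b, mgf (fun a => Y (a, b)) μ t * Real.exp (t * Z b) ∂ν := by
        rw [mgf, integral_prod_symm _ (hint t)]
        simp_rw [hslice]
    _ ≤ ∫ b, Real.exp (cY * t ^ 2 / 2) * Real.exp (t * Z b) ∂ν :=
        integral_mono_of_nonneg (ae_of_all _ fun b => mul_nonneg mgf_nonneg (Real.exp_nonneg _))
          ((hZ.integrable_exp_mul t).const_mul _) (ae_of_all _ (hslice_le t))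
    _ ≤ Real.exp (↑(cY + cZ) * t ^ 2 / 2) := by
        rw [integral_const_mul, NNReal.coe_add, add_mul, add_div, Real.exp_add]
        gcongr
        exact hZ.mgf_le t

lemma ProbabilityTheory.HasSubgaussianMGF.of_comp_measurePreserving {α β : Type*}
    [MeasurableSpace α] [MeasurableSpace β] {μ : Measure α} {ν : Measure β} {φ : α → β}
    {Z : β → ℝ} {c : ℝ≥0} (hZ : Measurable Z) (hφ : MeasurePreserving φ μ ν)
    (h : HasSubgaussianMGF (Z ∘ φ) c μ) : HasSubgaussianMGF Z c ν :=
  h.congr_identDistrib ⟨(hZ.comp hφ.measurable).aemeasurable, hZ.aemeasurable, by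
    rw [← Measure.map_map hZ hφ.measurable, hφ.map_eq]⟩

section McDiarmid

variable {X : Type*} {m : ℕ}

def HasBoundedDifferences (f : (Fin m → X) → ℝ) (c : ℝ) : Prop :=
  ∀ i ω x y, f (Function.update ω i x) - f (Function.update ω i y) ≤ c

lemma HasBoundedDifferences.sub_const_mul {f g : (Fin m → X) → ℝ} {c d a : ℝ}
    (hf : HasBoundedDifferences f c) (hg : HasBoundedDifferences g d) (ha : 0 ≤ a) :
    HasBoundedDifferences (fun ω => f ω - a * g ω) (c + a * d) := fun i ω x y => by
  have := mul_le_mul_of_nonneg_left (hg i ω y x) ha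
  linarith [hf i ω x y]

variable [MeasurableSpace X]

lemma measurePreserving_finCons (D : Measure X) [SigmaFinite D] :
    MeasurePreserving (fun p : X × (Fin m → X) => (Fin.cons p.1 p.2 : Fin (m + 1) → X))
      (D.prod (Measure.pi fun _ => D)) (Measure.pi fun _ => D) := by
  convert (measurePreserving_piFinSuccAbove (fun _ : Fin (m + 1) => D) 0).symm using 1
  ext p : 1
  simp [MeasurableEquiv.piFinSuccAbove_symm_apply, Fin.insertNthEquiv, Fin.insertNth_zero']

lemma HasBoundedDifferences.integral_finCons (D : Measure X) [IsProbabilityMeasure D]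
    {f : (Fin (m + 1) → X) → ℝ} {c : ℝ} (hf : HasBoundedDifferences f c)
    (hint : ∀ y, Integrable (fun x => f (Fin.cons x y)) D) :
    HasBoundedDifferences (fun y => ∫ x, f (Fin.cons x y) ∂D) c := fun i y v w => by
  rw [← integral_sub (hint _) (hint _)]
  refine (integral_mono ((hint _).sub (hint _)) (integrable_const c) fun x => ?_).trans_eq
    (by simp)
  simp only [Fin.cons_update]
  exact hf i.succ _ v w

lemma HasBoundedDifferences.hasSubgaussianMGF_finCons (D : Measure X) [IsProbabilityMeasure D]
    {f : (Fin (m + 1) → X) → ℝ} {c : ℝ≥0} (hf : HasBoundedDifferences f c) (hfm : Measurable f)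
    (hbdd : BddBelow (range f)) (y : Fin m → X) :
    HasSubgaussianMGF (fun x => f (Fin.cons x y) - ∫ x', f (Fin.cons x' y) ∂D) ((c / 2) ^ 2) D := by
  have hφ : BddBelow (range fun x => f (Fin.cons x y)) :=
    hbdd.mono (range_comp_subset_range _ f)
  have := hasSubgaussianMGF_of_mem_Icc (μ := D)
    (hfm.comp ((measurePreserving_finCons D).measurable.comp measurable_prodMk_right)).aemeasurable
    (ae_of_all _ (mem_Icc_ciInf_add_of_sub_le hφ fun x x' => by
      simpa [Fin.update_cons_zero] using hf 0 (Fin.cons x' y) x x'))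
  simpa using this

theorem HasBoundedDifferences.hasSubgaussianMGF (D : Measure X) [IsProbabilityMeasure D]
    {f : (Fin m → X) → ℝ} {c : ℝ≥0} (hf : HasBoundedDifferences f c) (hfm : Measurable f)
    (hbdd : ∃ C, ∀ ω, |f ω| ≤ C) :
    HasSubgaussianMGF (fun ω => f ω - ∫ ω', f ω' ∂(Measure.pi fun _ => D)) (m * (c / 2) ^ 2)
      (Measure.pi fun _ => D) := by
  induction m with
  | zero =>
    have hzero (ω : Fin 0 → X) : f ω - ∫ ω', f ω' ∂(Measure.pi fun _ => D) = 0 := by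
      simp [Subsingleton.elim _ ω]
    simp [hzero, HasSubgaussianMGF.fun_zero]
  | succ m ih =>
    obtain ⟨C, hC⟩ := hbdd
    have hcons := measurePreserving_finCons (m := m) D
    set F : X × (Fin m → X) → ℝ := fun p => f (Fin.cons p.1 p.2)
    have hFm : Measurable F := hfm.comp hcons.measurable
    have hFint (y : Fin m → X) : Integrable (fun x => F (x, y)) D :=
      (hFm.comp measurable_prodMk_right).integrable_of_abs_le fun x => hC _
    set g : (Fin m → X) → ℝ := fun y => ∫ x, F (x, y) ∂D
    have hgm : Measurable g := hFm.stronglyMeasurable.integral_prod_left'.measurable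
    have hg := ih (hf.integral_finCons D hFint) hgm ⟨C, fun y => by
      simpa using norm_integral_le_of_norm_le_const (f := fun x => F (x, y))
        (ae_of_all D fun x => hC (Fin.cons x y))⟩
    have hI : ∫ ω, f ω ∂(Measure.pi fun _ => D) = ∫ y, g y ∂(Measure.pi fun _ => D) := by
      rw [← hcons.map_eq, integral_map hcons.measurable.aemeasurable hfm.aestronglyMeasurable,
        integral_prod_symm _ (hFm.integrable_of_abs_le fun p => hC _)]
    refine HasSubgaussianMGF.of_comp_measurePreserving (hfm.sub_const _) hcons ?_
    -- `f (cons x y) - ∫ f = (F (x, y) - g y) + (g y - ∫ g)`: Hoeffding in `x`, induction in `y`.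
    convert HasSubgaussianMGF.add_prod_of_slices (hFm.sub (hgm.comp measurable_snd))
      (hgm.sub_const _) (hf.hasSubgaussianMGF_finCons D hfm ⟨-C, by
        rintro _ ⟨ω, rfl⟩; linarith [abs_le.1 (hC ω)]⟩) hg using 1
    · ext p
      simp [F, g, hI]
    · push_cast; ring

theorem HasBoundedDifferences.measureReal_ge_le (D : Measure X) [IsProbabilityMeasure D]
    {f : (Fin m → X) → ℝ} {c : ℝ≥0} (hf : HasBoundedDifferences f c) (hfm : Measurable f)
    (hbdd : ∃ C, ∀ ω, |f ω| ≤ C) {ε : ℝ} (hε : 0 ≤ ε) :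
    (Measure.pi fun _ => D).real {ω | ∫ ω', f ω' ∂(Measure.pi fun _ => D) + ε ≤ f ω} ≤
      Real.exp (-2 * ε ^ 2 / (m * c ^ 2)) := by
  have h := (hf.hasSubgaussianMGF D hfm hbdd).measure_ge_le hε
  simp only [le_sub_iff_add_le'] at h
  convert h using 2
  push_cast
  ring

theorem HasBoundedDifferences.ofReal_one_sub_exp_le_measure_lt (D : Measure X)
    [IsProbabilityMeasure D] {f : (Fin m → X) → ℝ} {c : ℝ≥0} (hf : HasBoundedDifferences f c)
    (hfm : Measurable f) (hbdd : ∃ C, ∀ ω, |f ω| ≤ C) {ε : ℝ} (hε : 0 ≤ ε) :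
    ENNReal.ofReal (1 - Real.exp (-2 * ε ^ 2 / (m * c ^ 2))) ≤
      (Measure.pi fun _ => D) {ω | f ω < ∫ ω', f ω' ∂(Measure.pi fun _ => D) + ε} := by
  set ν := Measure.pi fun _ : Fin m => D
  have hcompl : {ω | f ω < ∫ ω', f ω' ∂ν + ε} = {ω | ∫ ω', f ω' ∂ν + ε ≤ f ω}ᶜ := by
    ext ω
    simp
  rw [hcompl, ← ofReal_measureReal,
    probReal_compl_eq_one_sub (measurableSet_le measurable_const hfm)]
  exact ENNReal.ofReal_le_ofReal (by linarith [hf.measureReal_ge_le D hfm hbdd hε])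

end McDiarmid

section EmpiricalProcess

variable {X : Type*} {n : ℕ} {ι : Type*}

noncomputable def empiricalMean (h : X → ℝ) (ω : Fin n → X) : ℝ := (1 / (n : ℝ)) * ∑ i, h (ω i)

noncomputable def signedMean (σ : Fin n → Bool) (h : X → ℝ) (ω : Fin n → X) : ℝ :=
  (1 / (n : ℝ)) * ∑ i, (if σ i then (1 : ℝ) else -1) * h (ω i)

noncomputable def rademacherAverage (u : ι → X → ℝ) (ω : Fin n → X) : ℝ :=
  (∑ σ : Fin n → Bool, ⨆ k, signedMean σ (u k) ω) / 2 ^ n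

noncomputable def uniformDeviation [MeasurableSpace X] (D : Measure X) (u : ι → X → ℝ)
    (ω : Fin n → X) : ℝ :=
  ⨆ k, (∫ x, u k x ∂D - empiricalMean (u k) ω)

lemma radS_eq_rademacherAverage (ω : Fin n → X) (H : Set (X → ℝ)) :
    radS ω H = rademacherAverage (fun h : H => (h : X → ℝ)) ω := by
  simp only [radS, rademacherAverage, signedMean, sSup_image']

lemma one_div_mul_sum_le_one {s : Fin n → ℝ} (hs : ∀ i, s i ≤ 1) :
    (1 / (n : ℝ)) * ∑ i, s i ≤ 1 := by
  calc (1 / (n : ℝ)) * ∑ i, s i ≤ (1 / (n : ℝ)) * n := by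
        gcongr
        simpa using Finset.sum_le_sum fun i (_ : i ∈ Finset.univ) => hs i
    _ ≤ 1 := by rcases eq_or_ne (n : ℝ) 0 with h | h <;> simp [h]

lemma sum_div_two_pow_le {a : (Fin n → Bool) → ℝ} {c : ℝ} (h : ∀ σ, a σ ≤ c) :
    (∑ σ, a σ) / 2 ^ n ≤ c := by
  rw [div_le_iff₀ (by positivity)]
  simpa [Fintype.card_fun, mul_comm] using Finset.sum_le_sum fun σ (_ : σ ∈ Finset.univ) => h σ

lemma abs_sum_div_two_pow_le {a : (Fin n → Bool) → ℝ} {c : ℝ} (h : ∀ σ, |a σ| ≤ c) :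
    |(∑ σ, a σ) / 2 ^ n| ≤ c := by
  rw [abs_div, abs_of_pos (by positivity : (0 : ℝ) < 2 ^ n)]
  exact (div_le_div_of_nonneg_right (Finset.abs_sum_le_sum_abs _ _) (by positivity)).trans
    (sum_div_two_pow_le h)

lemma empiricalMean_mem_Icc {h : X → ℝ} (hh : ∀ x, h x ∈ Icc (0 : ℝ) 1) (ω : Fin n → X) :
    empiricalMean h ω ∈ Icc (0 : ℝ) 1 :=
  ⟨mul_nonneg (by positivity) (Finset.sum_nonneg fun i _ => (hh (ω i)).1),
    one_div_mul_sum_le_one fun i => (hh (ω i)).2⟩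

lemma abs_empiricalMean_sub_le_one {h : X → ℝ} (hh : ∀ x, h x ∈ Icc (0 : ℝ) 1)
    (ω ω' : Fin n → X) : |empiricalMean h ω - empiricalMean h ω'| ≤ 1 := by
  obtain ⟨a0, a1⟩ := empiricalMean_mem_Icc hh ω
  obtain ⟨b0, b1⟩ := empiricalMean_mem_Icc hh ω'
  exact abs_le.2 ⟨by linarith, by linarith⟩

lemma abs_signedMean_le_one {h : X → ℝ} (hh : ∀ x, h x ∈ Icc (0 : ℝ) 1) (σ : Fin n → Bool)
    (ω : Fin n → X) : |signedMean σ h ω| ≤ 1 := by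
  have hterm (i : Fin n) : |(if σ i then (1 : ℝ) else -1) * h (ω i)| ≤ 1 := by
    rw [abs_mul, abs_of_nonneg (hh (ω i)).1]
    split_ifs <;> simpa using (hh (ω i)).2
  calc |signedMean σ h ω|
      = (1 / (n : ℝ)) * |∑ i, (if σ i then (1 : ℝ) else -1) * h (ω i)| := by
        rw [signedMean, abs_mul, abs_of_nonneg (by positivity)]
    _ ≤ (1 / (n : ℝ)) * ∑ i, |(if σ i then (1 : ℝ) else -1) * h (ω i)| := by
        gcongr; exact Finset.abs_sum_le_sum_abs _ _
    _ ≤ 1 := one_div_mul_sum_le_one hterm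

lemma signedMean_not (σ : Fin n → Bool) (h : X → ℝ) (ω : Fin n → X) :
    signedMean (fun i => !σ i) h ω = -signedMean σ h ω := by
  simp only [signedMean, ← mul_neg, ← Finset.sum_neg_distrib]
  congr 1
  refine Finset.sum_congr rfl fun i _ => ?_
  by_cases hσ : σ i <;> simp [hσ]

lemma empiricalMean_update_sub (h : X → ℝ) (ω : Fin n → X) (i : Fin n) (x y : X) :
    empiricalMean h (Function.update ω i x) - empiricalMean h (Function.update ω i y) =
      1 / (n : ℝ) * (h x - h y) := by
  rw [empiricalMean, empiricalMean, ← mul_sub, Finset.sum_comp_update_sub (fun _ => h)]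

lemma signedMean_update_sub (σ : Fin n → Bool) (h : X → ℝ) (ω : Fin n → X) (i : Fin n)
    (x y : X) :
    signedMean σ h (Function.update ω i x) - signedMean σ h (Function.update ω i y) =
      1 / (n : ℝ) * ((if σ i then (1 : ℝ) else -1) * (h x - h y)) := by
  rw [signedMean, signedMean, ← mul_sub,
    Finset.sum_comp_update_sub (fun j z => (if σ j then (1 : ℝ) else -1) * h z), ← mul_sub]

section Bounds

variable {u : ι → X → ℝ} (hu : ∀ k x, u k x ∈ Icc (0 : ℝ) 1)
include hu

lemma abs_rademacherAverage_le_one [Nonempty ι] (ω : Fin n → X) : |rademacherAverage u ω| ≤ 1 :=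
  abs_sum_div_two_pow_le fun σ => abs_ciSup_le fun k => abs_signedMean_le_one (hu k) σ ω

lemma hasBoundedDifferences_rademacherAverage [Nonempty ι] :
    HasBoundedDifferences (rademacherAverage u : (Fin n → X) → ℝ) (1 / n) := by
  intro i ω x y
  rw [rademacherAverage, rademacherAverage, ← sub_div, ← Finset.sum_sub_distrib]
  refine sum_div_two_pow_le fun σ => ciSup_sub_ciSup_le (bddAbove_range_of_abs_le fun k =>
    abs_signedMean_le_one (hu k) σ _) fun k => ?_
  rw [signedMean_update_sub]
  obtain ⟨hx0, hx1⟩ := hu k x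
  obtain ⟨hy0, hy1⟩ := hu k y
  exact mul_le_of_le_one_right (by positivity) (by split_ifs <;> linarith)

variable [MeasurableSpace X] (D : Measure X) [IsProbabilityMeasure D]

lemma abs_integral_sub_empiricalMean_le_one (k : ι) (ω : Fin n → X) :
    |∫ x, u k x ∂D - empiricalMean (u k) ω| ≤ 1 := by
  have h0 : 0 ≤ ∫ x, u k x ∂D := integral_nonneg fun x => (hu k x).1
  have h1 : ∫ x, u k x ∂D ≤ 1 := by
    simpa using integral_mono_of_nonneg (.of_forall fun x => (hu k x).1)
      (integrable_const (μ := D) 1) (.of_forall fun x => (hu k x).2)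
  obtain ⟨e0, e1⟩ := empiricalMean_mem_Icc (hu k) ω
  exact abs_le.2 ⟨by linarith, by linarith⟩

lemma abs_uniformDeviation_le_one [Nonempty ι] (ω : Fin n → X) : |uniformDeviation D u ω| ≤ 1 :=
  abs_ciSup_le fun k => abs_integral_sub_empiricalMean_le_one hu D k ω

lemma integral_sub_empiricalMean_le_uniformDeviation (k : ι) (ω : Fin n → X) :
    ∫ x, u k x ∂D - empiricalMean (u k) ω ≤ uniformDeviation D u ω :=
  le_ciSup (bddAbove_range_of_abs_le fun k => abs_integral_sub_empiricalMean_le_one hu D k ω) k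

lemma hasBoundedDifferences_uniformDeviation [Nonempty ι] :
    HasBoundedDifferences (uniformDeviation D u : (Fin n → X) → ℝ) (1 / n) := by
  intro i ω x y
  refine ciSup_sub_ciSup_le (bddAbove_range_of_abs_le fun k =>
    abs_integral_sub_empiricalMean_le_one hu D k _) fun k => ?_
  have hdiff := empiricalMean_update_sub (u k) ω i y x
  obtain ⟨hx0, -⟩ := hu k x
  obtain ⟨-, hy1⟩ := hu k y
  calc _ = 1 / (n : ℝ) * (u k y - u k x) := by linarith
    _ ≤ 1 / n := mul_le_of_le_one_right (by positivity) (by linarith)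

end Bounds

variable [MeasurableSpace X] {u : ι → X → ℝ}

lemma measurable_empiricalMean {h : X → ℝ} (hh : Measurable h) :
    Measurable (empiricalMean h : (Fin n → X) → ℝ) := by
  unfold empiricalMean
  fun_prop

variable [Countable ι] (hum : ∀ k, Measurable (u k))
include hum

lemma measurable_uniformDeviation (D : Measure X) :
    Measurable (uniformDeviation D u : (Fin n → X) → ℝ) :=
  .iSup fun k => measurable_const.sub (measurable_empiricalMean (hum k))

lemma measurable_rademacherAverage : Measurable (rademacherAverage u : (Fin n → X) → ℝ) := by
  unfold rademacherAverage signedMean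
  refine .div_const (Finset.measurable_sum _ fun σ _ => .iSup fun k => ?_) _
  have := hum k
  fun_prop

end EmpiricalProcess

section Symmetrization

variable {X : Type*} {n : ℕ} {ι : Type*} {u : ι → X → ℝ}

lemma sum_iSup_signedMean_not (ω : Fin n → X) :
    ∑ σ : Fin n → Bool, ⨆ k, signedMean (fun i => !σ i) (u k) ω =
      ∑ σ : Fin n → Bool, ⨆ k, signedMean σ (u k) ω :=
  Fintype.sum_bijective _ (Function.Involutive.bijective fun _ => funext fun _ => Bool.not_not _)
    _ _ fun _ => rfl

lemma sum_iSup_signedMean_sub_le [Nonempty ι] (hu : ∀ k x, u k x ∈ Icc (0 : ℝ) 1)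
    (z : (Fin n → X) × (Fin n → X)) :
    (∑ σ : Fin n → Bool, ⨆ k, (signedMean σ (u k) z.2 - signedMean σ (u k) z.1)) / 2 ^ n ≤
      rademacherAverage u z.2 + rademacherAverage u z.1 := by
  have hσ (σ : Fin n → Bool) : ⨆ k, (signedMean σ (u k) z.2 - signedMean σ (u k) z.1) ≤
      (⨆ k, signedMean σ (u k) z.2) + ⨆ k, signedMean (fun i => !σ i) (u k) z.1 := by
    simp_rw [sub_eq_add_neg, ← signedMean_not]
    exact ciSup_add_le_ciSup_add_ciSup
      (bddAbove_range_of_abs_le fun k => abs_signedMean_le_one (hu k) _ _)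
      (bddAbove_range_of_abs_le fun k => abs_signedMean_le_one (hu k) _ _)
  calc _ ≤ (∑ σ : Fin n → Bool, ((⨆ k, signedMean σ (u k) z.2) +
        ⨆ k, signedMean (fun i => !σ i) (u k) z.1)) / 2 ^ n := by
        gcongr with σ
        exact hσ σ
    _ = _ := by
        rw [Finset.sum_add_distrib, sum_iSup_signedMean_not, add_div]
        rfl

def swapWhereFalse (σ : Fin n → Bool) (z : (Fin n → X) × (Fin n → X)) :
    (Fin n → X) × (Fin n → X) :=
  (fun i => if σ i then z.1 i else z.2 i, fun i => if σ i then z.2 i else z.1 i)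

lemma empiricalMean_swapWhereFalse_sub (σ : Fin n → Bool) (h : X → ℝ)
    (z : (Fin n → X) × (Fin n → X)) :
    empiricalMean h (swapWhereFalse σ z).2 - empiricalMean h (swapWhereFalse σ z).1 =
      signedMean σ h z.2 - signedMean σ h z.1 := by
  simp only [empiricalMean, signedMean, swapWhereFalse, ← mul_sub, ← Finset.sum_sub_distrib]
  congr 1
  refine Finset.sum_congr rfl fun i _ => ?_
  split_ifs <;> ring

variable [MeasurableSpace X]

lemma measurePreserving_swapWhereFalse (μ : Measure X) [SigmaFinite μ] (σ : Fin n → Bool) :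
    MeasurePreserving (swapWhereFalse σ)
      ((Measure.pi fun _ : Fin n => μ).prod (Measure.pi fun _ : Fin n => μ))
      ((Measure.pi fun _ : Fin n => μ).prod (Measure.pi fun _ : Fin n => μ)) := by
  let E := MeasurableEquiv.arrowProdEquivProdArrow X X (Fin n)
  have hE := measurePreserving_arrowProdEquivProdArrow X X (Fin n) (fun _ => μ) (fun _ => μ)
  have hS : MeasurePreserving (fun (p : Fin n → X × X) i => (if σ i then id else Prod.swap) (p i))
      (Measure.pi fun _ => μ.prod μ) (Measure.pi fun _ => μ.prod μ) :=
    measurePreserving_pi _ _ fun i => by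
      split_ifs
      exacts [.id _, Measure.measurePreserving_swap]
  convert (hE.comp hS).comp (hE.symm E) using 1
  ext z i <;> by_cases hσ : σ i <;>
    simp [swapWhereFalse, E, hσ, MeasurableEquiv.arrowProdEquivProdArrow]

lemma integral_empiricalMean (D : Measure X) [IsProbabilityMeasure D] (hn : n ≠ 0) {h : X → ℝ}
    (hh : Integrable h D) :
    ∫ ω, empiricalMean h ω ∂(Measure.pi fun _ : Fin n => D) = ∫ x, h x ∂D := by
  simp only [empiricalMean]
  rw [integral_const_mul, integral_finsetSum _ fun i _ => integrable_comp_eval hh]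
  have hcoord (i : Fin n) : ∫ ω, h (ω i) ∂(Measure.pi fun _ : Fin n => D) = ∫ x, h x ∂D :=
    integral_comp_eval hh.aestronglyMeasurable
  simp only [hcoord, Finset.sum_const, Finset.card_univ, Fintype.card_fin, nsmul_eq_mul]
  field_simp

lemma measurable_iSup_empiricalMean_sub [Countable ι] (hum : ∀ k, Measurable (u k)) :
    Measurable fun z : (Fin n → X) × (Fin n → X) =>
      ⨆ k, (empiricalMean (u k) z.2 - empiricalMean (u k) z.1) :=
  .iSup fun k => ((measurable_empiricalMean (hum k)).comp measurable_snd).sub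
    ((measurable_empiricalMean (hum k)).comp measurable_fst)

lemma integrable_uniformDeviation [Countable ι] [Nonempty ι] (D : Measure X)
    [IsProbabilityMeasure D] (μ : Measure (Fin n → X)) [IsFiniteMeasure μ]
    (hum : ∀ k, Measurable (u k)) (hu : ∀ k x, u k x ∈ Icc (0 : ℝ) 1) :
    Integrable (uniformDeviation D u) μ :=
  (measurable_uniformDeviation hum D).integrable_of_abs_le (abs_uniformDeviation_le_one hu D)

lemma integrable_rademacherAverage [Countable ι] [Nonempty ι] (μ : Measure (Fin n → X))
    [IsFiniteMeasure μ] (hum : ∀ k, Measurable (u k)) (hu : ∀ k x, u k x ∈ Icc (0 : ℝ) 1) :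
    Integrable (rademacherAverage u) μ :=
  (measurable_rademacherAverage hum).integrable_of_abs_le (abs_rademacherAverage_le_one hu)

variable [Countable ι] [Nonempty ι] (D : Measure X) [IsProbabilityMeasure D] (hn : n ≠ 0)
  (hum : ∀ k, Measurable (u k)) (hu : ∀ k x, u k x ∈ Icc (0 : ℝ) 1)
include hn hum hu

lemma integral_uniformDeviation_le_integral_iSup_sub :
    ∫ ω, uniformDeviation D u ω ∂(Measure.pi fun _ : Fin n => D) ≤
      ∫ z, ⨆ k, (empiricalMean (u k) z.2 - empiricalMean (u k) z.1)
        ∂((Measure.pi fun _ : Fin n => D).prod (Measure.pi fun _ : Fin n => D)) := by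
  set ν := Measure.pi fun _ : Fin n => D
  set W : (Fin n → X) × (Fin n → X) → ℝ :=
    fun z => ⨆ k, (empiricalMean (u k) z.2 - empiricalMean (u k) z.1)
  have hWb (z) : |W z| ≤ 1 := abs_ciSup_le fun k => abs_empiricalMean_sub_le_one (hu k) _ _
  have hWm : Measurable W := measurable_iSup_empiricalMean_sub hum
  have hWint : Integrable W (ν.prod ν) := hWm.integrable_of_abs_le hWb
  rw [integral_prod _ hWint]
  refine integral_mono (integrable_uniformDeviation D ν hum hu) hWint.integral_prod_left
    fun ω => ciSup_le fun k => ?_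
  have hint : Integrable (fun ω' => empiricalMean (u k) ω') ν :=
    (measurable_empiricalMean (hum k)).integrable_of_abs_le fun ω' =>
      abs_le.2 ⟨by linarith [(empiricalMean_mem_Icc (hu k) ω').1],
        (empiricalMean_mem_Icc (hu k) ω').2⟩
  calc ∫ x, u k x ∂D - empiricalMean (u k) ω
      = ∫ ω', (empiricalMean (u k) ω' - empiricalMean (u k) ω) ∂ν := by
        rw [integral_sub hint (integrable_const _), integral_empiricalMean D hn
          ((hum k).integrable_of_abs_le fun x => abs_le.2 ⟨by linarith [(hu k x).1], (hu k x).2⟩)]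
        simp
    _ ≤ ∫ ω', W (ω, ω') ∂ν :=
        integral_mono (hint.sub (integrable_const _))
          ((hWm.comp measurable_prodMk_left).integrable_of_abs_le fun ω' => hWb _)
          fun ω' => le_ciSup (bddAbove_range_of_abs_le fun k =>
            abs_empiricalMean_sub_le_one (hu k) _ _) k

theorem integral_uniformDeviation_le_two_mul_integral_rademacherAverage :
    ∫ ω, uniformDeviation D u ω ∂(Measure.pi fun _ : Fin n => D) ≤
      2 * ∫ ω, rademacherAverage u ω ∂(Measure.pi fun _ : Fin n => D) := by
  set ν := Measure.pi fun _ : Fin n => D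
  set W : (Fin n → Bool) → (Fin n → X) × (Fin n → X) → ℝ :=
    fun σ z => ⨆ k, (signedMean σ (u k) z.2 - signedMean σ (u k) z.1)
  have hWm (σ) : Measurable (W σ) := .iSup fun k => by
    have := hum k
    simp only [signedMean]
    fun_prop
  have hWb (σ z) : |W σ z| ≤ 2 := abs_ciSup_le fun k =>
    (abs_sub _ _).trans <| (add_le_add (abs_signedMean_le_one (hu k) σ z.2)
      (abs_signedMean_le_one (hu k) σ z.1)).trans_eq one_add_one_eq_two
  have hRint := integrable_rademacherAverage ν hum hu
  have hswap (σ) : ∫ z, ⨆ k, (empiricalMean (u k) z.2 - empiricalMean (u k) z.1) ∂(ν.prod ν) =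
      ∫ z, W σ z ∂(ν.prod ν) := by
    have hmp := measurePreserving_swapWhereFalse D σ
    have := integral_map (μ := ν.prod ν) hmp.measurable.aemeasurable
      (measurable_iSup_empiricalMean_sub hum).aestronglyMeasurable
    rw [hmp.map_eq] at this
    rw [this]
    simp_rw [empiricalMean_swapWhereFalse_sub]
    rfl
  calc _ ≤ ∫ z, ⨆ k, (empiricalMean (u k) z.2 - empiricalMean (u k) z.1) ∂(ν.prod ν) :=
        integral_uniformDeviation_le_integral_iSup_sub D hn hum hu
    _ = ∫ z, (∑ σ, W σ z) / 2 ^ n ∂(ν.prod ν) := by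
        rw [integral_div, integral_finsetSum _ fun σ _ => (hWm σ).integrable_of_abs_le (hWb σ)]
        simp [← hswap]
    _ ≤ ∫ z, (rademacherAverage u z.2 + rademacherAverage u z.1) ∂(ν.prod ν) :=
        integral_mono (((Finset.measurable_sum _ fun σ _ => hWm σ).div_const _).integrable_of_abs_le
            fun z => abs_sum_div_two_pow_le fun σ => hWb σ z)
          ((hRint.comp_snd ν).add (hRint.comp_fst ν)) (sum_iSup_signedMean_sub_le hu)
    _ = 2 * ∫ ω, rademacherAverage u ω ∂ν := by
        rw [integral_add (hRint.comp_snd ν) (hRint.comp_fst ν), integral_fun_snd, integral_fun_fst]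
        simp
        ring

end Symmetrization

lemma exp_neg_two_mul_sq_three_mul_sqrt_div {n : ℕ} (hn : n ≠ 0) {L : ℝ} (hL : 0 ≤ L) :
    Real.exp (-2 * (3 * √(L / (2 * n))) ^ 2 / (n * (3 / n) ^ 2)) = Real.exp (-L) := by
  have hn' : (n : ℝ) ≠ 0 := Nat.cast_ne_zero.2 hn
  rw [mul_pow, Real.sq_sqrt (by positivity)]
  congr 1
  field_simp

theorem ofReal_one_sub_half_le_measure_uniformDeviation_le {X : Type*} [MeasurableSpace X]
    {n : ℕ} {ι : Type*} [Countable ι] [Nonempty ι] {u : ι → X → ℝ} (D : Measure X)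
    [IsProbabilityMeasure D] (hn : n ≠ 0) (hum : ∀ k, Measurable (u k))
    (hu : ∀ k x, u k x ∈ Icc (0 : ℝ) 1) {δ : ℝ} (hδ : 0 < δ) (hδ2 : δ ≤ 2) :
    ENNReal.ofReal (1 - δ / 2) ≤ (Measure.pi fun _ : Fin n => D)
      {ω | uniformDeviation D u ω ≤
        2 * rademacherAverage u ω + 3 * √(Real.log (2 / δ) / (2 * n))} := by
  set ν := Measure.pi fun _ : Fin n => D
  set F : (Fin n → X) → ℝ := fun ω => uniformDeviation D u ω - 2 * rademacherAverage u ω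
  have hF : HasBoundedDifferences F ((3 / n : ℝ≥0) : ℝ) := by
    convert (hasBoundedDifferences_uniformDeviation hu D).sub_const_mul
      (hasBoundedDifferences_rademacherAverage hu) zero_le_two using 1
    push_cast
    ring
  have hFm : Measurable F :=
    (measurable_uniformDeviation hum D).sub ((measurable_rademacherAverage hum).const_mul 2)
  have hFbdd : ∃ C, ∀ ω, |F ω| ≤ C := ⟨1 + 2 * 1, fun ω => (abs_sub _ _).trans <| by
    rw [abs_mul, abs_two]
    gcongr
    exacts [abs_uniformDeviation_le_one hu D ω, abs_rademacherAverage_le_one hu ω]⟩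
  have hEF : ∫ ω, F ω ∂ν ≤ 0 := by
    rw [integral_sub (integrable_uniformDeviation D ν hum hu)
      ((integrable_rademacherAverage ν hum hu).const_mul 2), integral_const_mul]
    linarith [integral_uniformDeviation_le_two_mul_integral_rademacherAverage D hn hum hu]
  have hmcd := hF.ofReal_one_sub_exp_le_measure_lt D hFm hFbdd
    (ε := 3 * √(Real.log (2 / δ) / (2 * n))) (by positivity)
  rw [NNReal.coe_div, NNReal.coe_ofNat, NNReal.coe_natCast, exp_neg_two_mul_sq_three_mul_sqrt_div hn
    (Real.log_nonneg (by rw [le_div_iff₀ hδ]; linarith)), Real.exp_neg,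
    Real.exp_log (by positivity), inv_div] at hmcd
  exact hmcd.trans (measure_mono fun ω hω => by
    simp only [mem_ofPred_eq, F] at hω ⊢
    linarith)

theorem stmt_4 {X : Type*} [MeasurableSpace X]
    (D : Measure X) [IsProbabilityMeasure D]
    (Ht : Set (X → ℝ)) (hHcount : Ht.Countable) (hHne : Ht.Nonempty)
    (hmeas : ∀ h ∈ Ht, Measurable h)
    (hrange : ∀ h ∈ Ht, ∀ x, h x = 0 ∨ h x = 1)
    (n : ℕ) (hn : 1 ≤ n) (δ : ℝ) (hδ : δ ∈ Ioo (0 : ℝ) 1) :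
    ENNReal.ofReal (1 - δ) ≤
      (Measure.pi fun _ : Fin n => D)
        {ω | ∀ h ∈ Ht,
          ∫ x, h x ∂D ≤
            (1 / (n : ℝ)) * ∑ i, h (ω i) + 2 * radS ω Ht +
              3 * Real.sqrt (Real.log (2 / δ) / (2 * n))} := by
  have := hHcount.to_subtype
  have := hHne.to_subtype
  have hu (h : Ht) (x : X) : (h : X → ℝ) x ∈ Icc (0 : ℝ) 1 := by
    rcases hrange h h.2 x with hx | hx <;> simp [hx]
  have hgood := ofReal_one_sub_half_le_measure_uniformDeviation_le (n := n)
    (u := fun h : Ht => (h : X → ℝ)) D (by omega) (fun h => hmeas h h.2) hu hδ.1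
    (by linarith [hδ.2])
  refine (ENNReal.ofReal_le_ofReal (by linarith [hδ.1])).trans <|
    hgood.trans <| measure_mono fun ω hω h hh => ?_
  have := integral_sub_empiricalMean_le_uniformDeviation hu D ⟨h, hh⟩ ω
  simp only [mem_ofPred_eq] at hω
  rw [radS_eq_rademacherAverage]
  simp only [empiricalMean] at this
  linarith
end
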